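/- arXiv:1704.04778 — 3 statements merged into one kernel-verified Lean document; each statement's English description precedes it below -/
import Mathlib

section
/- Let μ be a positive Radon measure on ℝ^d which is weakly admissible, i.e., for every continuous compactly supported function f : ℝ^d → ℂ the Fourier transform 𝓕f lies in L²(μ). Then for every compact set K ⊆ ℝ^d there exists a constant C_K ≥ 0 such that for every continuous f : ℝ^d → ℂ with support contained in K one has (∫_{ℝ^d} ‖𝓕f(ξ)‖² dμ(ξ))^{1/2} ≤ C_K · ‖f‖_∞. -/
open MeasureTheory Filter
open scoped FourierTransform ENNReal Topology

/-!
Closed graph theorem. The bounded continuous functions supported in `K` form a Banach space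
under the sup norm, and by admissibility `f ↦ 𝓕 f` maps it linearly into `L²(μ)`. For each
`ξ`, `|𝓕 f ξ| ≤ vol K · ‖f‖_∞`, so `f ↦ 𝓕 f ξ` is continuous; since an `L²` limit is an a.e.
limit along a subsequence, the graph of `f ↦ 𝓕 f` is closed, and the map is bounded.
-/

namespace BoundedContinuousFunction

variable {α 𝕜 E : Type*} [TopologicalSpace α] [NormedField 𝕜] [NormedAddCommGroup E]
  [NormedSpace 𝕜 E] {K : Set α}

variable (𝕜 E) in
def supportedIn (K : Set α) : Submodule 𝕜 (α →ᵇ E) where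
  carrier := {f | Function.support f ⊆ K}
  add_mem' hf hg := (Function.support_add _ _).trans (Set.union_subset hf hg)
  zero_mem' := by simp
  smul_mem' c _ hf := (Function.support_const_smul_subset c _).trans hf

theorem mem_supportedIn {f : α →ᵇ E} : f ∈ supportedIn 𝕜 E K ↔ Function.support f ⊆ K :=
  Iff.rfl

theorem isClosed_supportedIn (K : Set α) : IsClosed (supportedIn 𝕜 E K : Set (α →ᵇ E)) := by
  have : (supportedIn 𝕜 E K : Set (α →ᵇ E)) = ⋂ x ∈ Kᶜ, {f | f x = 0} := by
    ext f
    simp only [SetLike.mem_coe, mem_supportedIn, Function.support_subset_iff', Set.mem_iInter,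
      Set.mem_compl_iff, Set.mem_ofPred_eq]
  rw [this]
  exact isClosed_biInter fun x _ => isClosed_eq (continuous_eval_const x) continuous_const

instance [CompleteSpace E] (K : Set α) : CompleteSpace (supportedIn 𝕜 E K) :=
  (isClosed_supportedIn K).completeSpace_coe

theorem hasCompactSupport_of_mem_supportedIn [R1Space α] (hK : IsCompact K) {f : α →ᵇ E}
    (hf : f ∈ supportedIn 𝕜 E K) : HasCompactSupport f :=
  HasCompactSupport.intro hK (Function.support_subset_iff'.mp hf)

end BoundedContinuousFunction

open BoundedContinuousFunction

theorem LinearMap.exists_toReal_eLpNorm_le_of_continuous_apply {𝕜 X α E : Type*}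
    [NontriviallyNormedField 𝕜] [NormedAddCommGroup X] [NormedSpace 𝕜 X] [CompleteSpace X]
    [MeasurableSpace α] {μ : Measure α} [NormedAddCommGroup E] [NormedSpace 𝕜 E] [CompleteSpace E]
    {p : ℝ≥0∞} [Fact (1 ≤ p)] (A : X →ₗ[𝕜] α → E) (hA : ∀ a, Continuous fun x => A x a)
    (hmem : ∀ x, MemLp (A x) p μ) :
    ∃ C, 0 ≤ C ∧ ∀ x, (eLpNorm (A x) p μ).toReal ≤ C * ‖x‖ := by
  let T : X →ₗ[𝕜] Lp E p μ :=
    { toFun x := (hmem x).toLp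
      map_add' x y := by simp only [map_add]; exact MemLp.toLp_add (hmem x) (hmem y)
      map_smul' c x := by simp only [map_smul]; exact MemLp.toLp_const_smul c (hmem x) }
  have hT : ∀ x, T x =ᵐ[μ] A x := fun x => (hmem x).coeFn_toLp
  have hgraph : ∀ (u : ℕ → X) x y, Tendsto u atTop (𝓝 x) → Tendsto (T ∘ u) atTop (𝓝 y) →
      y = T x := by
    intro u x y hu hTu
    obtain ⟨ns, hns, hae⟩ :=
      ((tendstoInMeasure_of_tendsto_Lp hTu).congr_left fun n => hT (u n)).exists_seq_tendsto_ae
    have hy : ⇑y =ᵐ[μ] A x := by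
      filter_upwards [hae] with a ha
      exact tendsto_nhds_unique ha ((((hA a).tendsto x).comp hu).comp hns.tendsto_atTop)
    exact Lp.ext (hy.trans (hT x).symm)
  let T' : X →L[𝕜] Lp E p μ := .ofSeqClosedGraph hgraph
  refine ⟨‖T'‖, T'.opNorm_nonneg, fun x => ?_⟩
  rw [← Lp.norm_toLp _ (hmem x)]
  exact T'.le_opNorm x

section Fourier

variable {V E : Type*} [NormedAddCommGroup V] [InnerProductSpace ℝ V] [MeasurableSpace V]
  [BorelSpace V] [FiniteDimensional ℝ V] [NormedAddCommGroup E] [NormedSpace ℂ E] {K : Set V}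

theorem Real.fourier_add_of_integrable {f g : V → E} (hf : Integrable f) (hg : Integrable g) :
    𝓕 (f + g) = 𝓕 f + 𝓕 g :=
  VectorFourier.fourierIntegral_add Real.continuous_fourierChar continuous_inner hf hg

theorem Real.norm_fourier_le_of_support_subset {f : V → E} {C : ℝ} (hK : volume K < ∞)
    (hfK : Function.support f ⊆ K) (hC : ∀ v, ‖f v‖ ≤ C) (ξ : V) :
    ‖𝓕 f ξ‖ ≤ C * volume.real K :=
  calc ‖𝓕 f ξ‖ ≤ ∫ v, ‖f v‖ := VectorFourier.norm_fourierIntegral_le_integral_norm _ _ _ _ _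
    _ = ∫ v in K, ‖f v‖ := (setIntegral_eq_integral_of_forall_compl_eq_zero fun v hv => by
        rw [Function.support_subset_iff'.mp hfK v hv, norm_zero]).symm
    _ ≤ C * volume.real K :=
        (Real.le_norm_self _).trans <|
          norm_setIntegral_le_of_norm_le_const hK fun v _ => (norm_norm (f v)).trans_le (hC v)

noncomputable def fourierSupportedIn (hK : IsCompact K) : supportedIn ℂ E K →ₗ[ℂ] V → E where
  toFun f := 𝓕 ⇑(f : V →ᵇ E)
  map_add' f g := Real.fourier_add_of_integrable
    (f.1.continuous.integrable_of_hasCompactSupport (hasCompactSupport_of_mem_supportedIn hK f.2))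
    (g.1.continuous.integrable_of_hasCompactSupport (hasCompactSupport_of_mem_supportedIn hK g.2))
  map_smul' _ _ := VectorFourier.fourierIntegral_const_smul _ _ _ _ _

theorem continuous_fourierSupportedIn_apply (hK : IsCompact K) (ξ : V) :
    Continuous fun f => fourierSupportedIn (E := E) hK f ξ :=
  AddMonoidHomClass.continuous_of_bound (LinearMap.proj ξ ∘ₗ fourierSupportedIn hK)
    (volume.real K) fun f => by
    rw [mul_comm]
    exact Real.norm_fourier_le_of_support_subset hK.measure_lt_top f.2 (norm_coe_le_norm f.1) ξ

end Fourier

theorem MeasureTheory.MemLp.toReal_eLpNorm_two_eq_sqrt {α E : Type*} [MeasurableSpace α]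
    {μ : Measure α} [NormedAddCommGroup E] {f : α → E} (hf : MemLp f 2 μ) :
    (eLpNorm f 2 μ).toReal = Real.sqrt (∫ a, ‖f a‖ ^ 2 ∂μ) := by
  rw [hf.eLpNorm_eq_integral_rpow_norm two_ne_zero ENNReal.ofNat_ne_top,
    ENNReal.toReal_ofReal (by positivity), Real.sqrt_eq_rpow]
  norm_num [Real.rpow_natCast]

theorem fourierTransformable_sap_stmt0_general {d : ℕ}
    (μ : Measure (EuclideanSpace ℝ (Fin d)))
    (hadm : ∀ f : EuclideanSpace ℝ (Fin d) → ℂ, Continuous f → HasCompactSupport f →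
      MemLp (𝓕 f) 2 μ) :
    ∀ K : Set (EuclideanSpace ℝ (Fin d)), IsCompact K →
      ∃ C : ℝ, 0 ≤ C ∧ ∀ f : EuclideanSpace ℝ (Fin d) → ℂ, Continuous f →
        Function.support f ⊆ K →
        Real.sqrt (∫ ξ, ‖𝓕 f ξ‖ ^ 2 ∂μ) ≤ C * ⨆ t, ‖f t‖ := by
  intro K hK
  have : Fact ((1 : ℝ≥0∞) ≤ 2) := ⟨one_le_two⟩
  obtain ⟨C, hC0, hC⟩ := (fourierSupportedIn hK).exists_toReal_eLpNorm_le_of_continuous_apply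
    (continuous_fourierSupportedIn_apply hK) fun f : supportedIn ℂ ℂ K =>
      hadm _ f.1.continuous (hasCompactSupport_of_mem_supportedIn hK f.2)
  refine ⟨C, hC0, fun f hf hfK => ?_⟩
  have hf_cs : HasCompactSupport f :=
    HasCompactSupport.intro hK (Function.support_subset_iff'.mp hfK)
  let g : supportedIn ℂ ℂ K := ⟨ofCompactSupport f hf hf_cs, hfK⟩
  calc Real.sqrt (∫ ξ, ‖𝓕 f ξ‖ ^ 2 ∂μ)
      = (eLpNorm (𝓕 f) 2 μ).toReal := (hadm f hf hf_cs).toReal_eLpNorm_two_eq_sqrt.symm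
    _ ≤ C * ‖g‖ := hC g
    _ = C * ⨆ t, ‖f t‖ := by rw [Submodule.coe_norm, norm_eq_iSup_norm]; rfl

/-- If a positive Radon measure `μ` on `ℝ^d` is weakly admissible (the Fourier
transform of every continuous compactly supported function is in `L²(μ)`), then for every compact
set `K` there is a constant `C_K ≥ 0` with
`(∫ ‖𝓕f‖² dμ)^{1/2} ≤ C_K · ‖f‖_∞` for all continuous `f` supported in `K`. -/
theorem fourierTransformable_sap_stmt0 {d : ℕ}
    (μ : Measure (EuclideanSpace ℝ (Fin d))) [μ.Regular]
    (hadm : ∀ f : EuclideanSpace ℝ (Fin d) → ℂ, Continuous f → HasCompactSupport f →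
      MemLp (𝓕 f) 2 μ) :
    ∀ K : Set (EuclideanSpace ℝ (Fin d)), IsCompact K →
      ∃ C : ℝ, 0 ≤ C ∧ ∀ f : EuclideanSpace ℝ (Fin d) → ℂ, Continuous f →
        Function.support f ⊆ K →
        Real.sqrt (∫ ξ, ‖𝓕 f ξ‖ ^ 2 ∂μ) ≤ C * ⨆ t, ‖f t‖ :=
  fourierTransformable_sap_stmt0_general μ hadm
end

section
/- Let 𝓛 ⊂ ℝ^d × ℝ^m be a full-rank lattice such that the projection p₁ onto ℝ^d is injective on 𝓛 and p₂(𝓛) is dense in ℝ^m, and let h : ℝ^m → ℂ be continuous with compact support. Then the weighted Dirac comb ω_h = ∑_{(x,x⋆)∈𝓛} h(x⋆) δ_x is a strongly almost periodic translation bounded measure; explicitly: (a) for every compact K ⊆ ℝ^d, sup_{t ∈ ℝ^d} ∑_{(x,x⋆) ∈ 𝓛, x ∈ t+K} ‖h(x⋆)‖ < ∞; and (b) for every continuous compactly supported f : ℝ^d → ℂ, the function F(t) = ∑_{(x,x⋆)∈𝓛} h(x⋆) f(t−x) is a well-defined (absolutely summable) bounded uniformly continuous function whose set of translates {F(·−s)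 : s ∈ ℝ^d} is totally bounded in the supremum norm. -/
/-!
Put `G (x, y) = f x * h (-y)` on `V = ℝ^d × ℝ^m`. The function `F` of (b) is `t ↦ P (t, 0)`, where
`P v = ∑_{l ∈ L} G (v - l)` is the `L`-periodization of `G`: a locally finite sum, hence continuous
and `L`-periodic. As `V / L` is compact, `P` is bounded and uniformly continuous, and its
translates `P (· - v)` only depend on `v` modulo `L`, i.e. on a point of a compact fundamental set;
so they form a totally bounded family, and the translates of `F` are among their restrictions.
For (a), a translate of a compact set `C` contains a uniformly bounded number of lattice points,
because their differences lie in the finite set `L ∩ (C - C)`.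
-/

open MeasureTheory Metric Filter
open scoped Pointwise FourierTransform RealInnerProductSpace ENNReal Topology

noncomputable section

/-- A bounded continuous function is Bohr (strongly) almost periodic if its set of translates is
totally bounded in the supremum norm (expressed via finite `ε`-nets of translates). -/
def IsBohrAlmostPeriodic {d : ℕ} (F : EuclideanSpace ℝ (Fin d) → ℂ) : Prop :=
  Continuous F ∧ (∃ C : ℝ, ∀ t, ‖F t‖ ≤ C) ∧
    ∀ ε : ℝ, 0 < ε → ∃ S : Finset (EuclideanSpace ℝ (Fin d)),
      ∀ s : EuclideanSpace ℝ (Fin d), ∃ s₀ ∈ S,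
        ∀ t : EuclideanSpace ℝ (Fin d), ‖F (t - s) - F (t - s₀)‖ ≤ ε

open Function Set

theorem HasCompactSupport.mul_prod {X Y R : Type*} [TopologicalSpace X] [TopologicalSpace Y]
    [MulZeroClass R] {f : X → R} {g : Y → R} (hf : HasCompactSupport f)
    (hg : HasCompactSupport g) : HasCompactSupport fun p : X × Y => f p.1 * g p.2 := by
  refine .intro' (hf.prod hg) ((isClosed_tsupport f).prod (isClosed_tsupport g)) fun p hp => ?_
  rcases not_and_or.mp (mem_prod.not.mp hp) with h | h
  · rw [image_eq_zero_of_notMem_tsupport h, zero_mul]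
  · rw [image_eq_zero_of_notMem_tsupport h, mul_zero]

theorem IsCompact.sub {G : Type*} [AddGroup G] [TopologicalSpace G] [IsTopologicalAddGroup G]
    {s t : Set G} (hs : IsCompact s) (ht : IsCompact t) : IsCompact (s - t) := by
  simpa [sub_eq_add_neg] using hs.add ht.neg

namespace ZLattice

section Periodization

variable {V E : Type*} [NormedAddCommGroup V] [NormedAddCommGroup E]
variable (L : Submodule ℤ V)

def periodization (G : V → E) (v : V) : E := ∑' l : L, G (v - l)

variable {L} in
theorem periodization_periodic (G : V → E) (l : L) : Periodic (periodization L G) l := by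
  intro v
  rw [periodization, ← (Equiv.addRight l).tsum_eq]
  simp [periodization, add_sub_add_right_eq_sub]

variable [DiscreteTopology L]

theorem finite_coe_preimage_of_isCompact {C : Set V} (hC : IsCompact C) :
    {l : L | (l : V) ∈ C}.Finite := by
  have hL : IsClosed (L : Set V) := AddSubgroup.isClosed_of_discrete (H := L.toAddSubgroup)
  exact (hL.isClosedEmbedding_subtypeVal.isCompact_preimage hC).finite_of_discrete

theorem exists_card_le_of_isCompact {C : Set V} (hC : IsCompact C) :
    ∃ N : ℕ, ∀ v : V, ∃ s : Finset L, s.card ≤ N ∧ ∀ l : L, (l : V) - v ∈ C → l ∈ s := by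
  classical
  have hT := finite_coe_preimage_of_isCompact L (hC.sub hC)
  refine ⟨hT.toFinset.card, fun v => ?_⟩
  by_cases hne : ∃ l₀ : L, (l₀ : V) - v ∈ C
  · obtain ⟨l₀, hl₀⟩ := hne
    refine ⟨hT.toFinset.image (· + l₀), Finset.card_image_le, fun l hl => ?_⟩
    refine Finset.mem_image.mpr ⟨l - l₀, ?_, sub_add_cancel l l₀⟩
    simpa using Set.sub_mem_sub hl hl₀
  · exact ⟨∅, by simp, fun l hl => (hne ⟨l, hl⟩).elim⟩

theorem exists_tsum_le_mul_of_isCompact {C : Set V} (hC : IsCompact C) :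
    ∃ N : ℕ, ∀ (v : V) (g : L → ℝ≥0∞) (c : ℝ≥0∞), (∀ l, g l ≤ c) →
      (∀ l : L, (l : V) - v ∉ C → g l = 0) → ∑' l, g l ≤ N * c := by
  obtain ⟨N, hN⟩ := exists_card_le_of_isCompact L hC
  refine ⟨N, fun v g c hgc hg => ?_⟩
  obtain ⟨s, hcard, hs⟩ := hN v
  calc ∑' l, g l = ∑ l ∈ s, g l := tsum_eq_sum fun l hl => hg l (mt (hs l) hl)
    _ ≤ s.card • c := Finset.sum_le_card_nsmul s g c fun l _ => hgc l
    _ ≤ N * c := by rw [nsmul_eq_mul]; gcongr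

variable {L}

theorem exists_finset_apply_sub_eq_zero {G : V → E} (hG : HasCompactSupport G) {K : Set V}
    (hK : IsCompact K) : ∃ s : Finset L, ∀ v ∈ K, ∀ l ∉ s, G (v - l) = 0 := by
  have hfin := finite_coe_preimage_of_isCompact L (hK.sub hG)
  refine ⟨hfin.toFinset, fun v hv l hl => ?_⟩
  by_contra hne
  refine hl (hfin.mem_toFinset.mpr ?_)
  simpa using Set.sub_mem_sub hv (subset_tsupport G hne)

theorem summable_norm_apply_sub {G : V → E} (hG : HasCompactSupport G) (v : V) :
    Summable fun l : L => ‖G (v - l)‖ := by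
  obtain ⟨s, hs⟩ := exists_finset_apply_sub_eq_zero (L := L) hG isCompact_singleton
  exact summable_of_ne_finset_zero fun l hl => by rw [hs v rfl l hl, norm_zero]

theorem continuous_periodization [ProperSpace V] {G : V → E} (hG : Continuous G)
    (hGc : HasCompactSupport G) : Continuous (periodization L G) := by
  refine continuous_iff_continuousAt.mpr fun v₀ => ?_
  obtain ⟨s, hs⟩ := exists_finset_apply_sub_eq_zero (L := L) hGc (isCompact_closedBall v₀ 1)
  have hsum : Continuous fun v => ∑ l ∈ s, G (v - l) := by fun_prop
  refine hsum.continuousAt.congr (eventually_of_mem (closedBall_mem_nhds v₀ one_pos) ?_)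
  exact fun v hv => (tsum_eq_sum fun l hl => hs v hv l hl).symm

end Periodization

section Lattice

variable {V : Type*} [NormedAddCommGroup V] [NormedSpace ℝ V] [FiniteDimensional ℝ V]
variable (L : Submodule ℤ V) [DiscreteTopology L] [IsZLattice ℝ L]

theorem exists_isCompact_forall_add_mem :
    ∃ D : Set V, IsCompact D ∧ ∀ v : V, ∃ l : L, v + l ∈ D := by
  have := ZLattice.module_free ℝ L
  let b := Module.Free.chooseBasis ℤ L
  refine ⟨_, (b.ofZLatticeBasis ℝ).parallelepiped.isCompact, fun v => ?_⟩
  let l : L := b.repr.symm (Finsupp.equivFunOnFinite.symm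
    fun i ↦ ⌊(b.ofZLatticeBasis ℝ).repr v i⌋)
  refine ⟨-l, ?_⟩
  simp [parallelepiped_basis_eq, l, Int.floor_le, Int.lt_floor_add_one, le_of_lt,
    add_comm (1 : ℝ)]

variable {L}

theorem uniformContinuous_of_periodic {β : Type*} [PseudoMetricSpace β] {P : V → β}
    (hP : Continuous P) (hper : ∀ l : L, Periodic P l) : UniformContinuous P := by
  refine Metric.uniformContinuous_iff.mpr fun ε hε => ?_
  obtain ⟨D, hD, hDL⟩ := exists_isCompact_forall_add_mem L
  have hK : IsCompact (cthickening 1 D) := hD.cthickening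
  obtain ⟨δ, hδ, hPδ⟩ := Metric.uniformContinuousOn_iff.mp
    (hK.uniformContinuousOn_of_continuous (f := P) hP.continuousOn) ε hε
  refine ⟨min δ 1, by positivity, fun {a c} hac => ?_⟩
  obtain ⟨l, hl⟩ := hDL a
  have hdist : dist (a + l) (c + l) < min δ 1 := by rwa [dist_add_right]
  have hc : c + l ∈ cthickening 1 D := mem_cthickening_of_dist_le _ _ _ _ hl <| by
    rw [dist_comm]; exact hdist.le.trans (min_le_right _ _)
  simpa only [(hper l) _] using
    hPδ _ (self_subset_cthickening _ hl) _ hc (hdist.trans_le (min_le_left _ _))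

theorem isBohrAlmostPeriodic_comp_of_periodic {d : ℕ} {P : V → ℂ} (hP : Continuous P)
    (hper : ∀ l : L, Periodic P l) (ι : EuclideanSpace ℝ (Fin d) →L[ℝ] V) :
    IsBohrAlmostPeriodic (P ∘ ι) := by
  refine ⟨hP.comp ι.continuous, ?_, fun ε hε => ?_⟩
  · obtain ⟨C, hC⟩ := (IsZLattice.isCompact_range_of_periodic L P hP
      fun z w hw => hper ⟨w, hw⟩ z).isBounded.exists_norm_le
    exact ⟨C, fun t => hC _ (mem_range_self _)⟩
  obtain ⟨δ, hδ, hPδ⟩ :=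
    Metric.uniformContinuous_iff.mp (uniformContinuous_of_periodic hP hper) ε hε
  obtain ⟨D, hD, hDL⟩ := exists_isCompact_forall_add_mem L
  -- `g s` represents `ι s` modulo `L` inside `D`, so finitely many of the `g s` are `δ`-dense
  -- among all of them.
  choose l hl using fun s => hDL (ι s)
  set g := fun s => ι s + l s
  have hg : IsCompact (closure (range g)) := hD.closure_of_subset (range_subset_iff.mpr hl)
  obtain ⟨S, hS⟩ := hg.elim_finite_subcover (fun s => ball (g s) δ) (fun _ => isOpen_ball)
    fun x hx => mem_iUnion.mpr (mem_closure_range_iff.mp hx δ hδ)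
  refine ⟨S, fun s => ?_⟩
  obtain ⟨s₀, hs₀, hs⟩ := mem_iUnion₂.mp (hS (subset_closure (mem_range_self s)))
  refine ⟨s₀, hs₀, fun t => ?_⟩
  have hshift : ∀ s, P (ι (t - s)) = P (ι t - g s) := fun s => by
    rw [show ι t - g s = ι (t - s) - l s by simp [g, sub_add_eq_sub_sub], (hper (l s)).sub_eq]
  rw [← dist_eq_norm, comp_apply, comp_apply, hshift, hshift]
  exact (hPδ (by rwa [dist_sub_left])).le

end Lattice

end ZLattice

theorem fourierTransformable_sap_stmt13_general {d m : ℕ}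
    (L : Submodule ℤ (EuclideanSpace ℝ (Fin d) × EuclideanSpace ℝ (Fin m)))
    [DiscreteTopology L] [IsZLattice ℝ L]
    (h : EuclideanSpace ℝ (Fin m) → ℂ) (hh : Continuous h) (hhc : HasCompactSupport h) :
    -- (a) translation boundedness of `ω_h`
    (∀ K : Set (EuclideanSpace ℝ (Fin d)), IsCompact K →
      (⨆ t : EuclideanSpace ℝ (Fin d),
        ∑' l : {y : L // (y : EuclideanSpace ℝ (Fin d) × EuclideanSpace ℝ (Fin m)).1
            ∈ (t +ᵥ K : Set (EuclideanSpace ℝ (Fin d)))},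
          (‖h (l.1 : EuclideanSpace ℝ (Fin d) × EuclideanSpace ℝ (Fin m)).2‖₊ : ℝ≥0∞)) < ⊤) ∧
    -- (b) strong almost periodicity of `ω_h`
    (∀ f : EuclideanSpace ℝ (Fin d) → ℂ, Continuous f → HasCompactSupport f →
      (∀ t : EuclideanSpace ℝ (Fin d),
        Summable fun l : L =>
          ‖h (l : EuclideanSpace ℝ (Fin d) × EuclideanSpace ℝ (Fin m)).2
            * f (t - (l : EuclideanSpace ℝ (Fin d) × EuclideanSpace ℝ (Fin m)).1)‖) ∧
      UniformContinuous (fun t : EuclideanSpace ℝ (Fin d) =>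
        ∑' l : L, h (l : EuclideanSpace ℝ (Fin d) × EuclideanSpace ℝ (Fin m)).2
          * f (t - (l : EuclideanSpace ℝ (Fin d) × EuclideanSpace ℝ (Fin m)).1)) ∧
      IsBohrAlmostPeriodic (fun t : EuclideanSpace ℝ (Fin d) =>
        ∑' l : L, h (l : EuclideanSpace ℝ (Fin d) × EuclideanSpace ℝ (Fin m)).2
          * f (t - (l : EuclideanSpace ℝ (Fin d) × EuclideanSpace ℝ (Fin m)).1))) := by
  refine ⟨fun K hK => ?_, fun f hf hfc => ?_⟩
  · obtain ⟨C, hC⟩ := hh.bounded_above_of_compact_support hhc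
    obtain ⟨N, hN⟩ := ZLattice.exists_tsum_le_mul_of_isCompact L (hK.prod hhc)
    refine (iSup_le fun t => ?_).trans_lt
      (ENNReal.mul_lt_top (ENNReal.natCast_lt_top N) (ENNReal.ofReal_lt_top (r := C)))
    refine (tsum_subtype {y : L | y.1.1 ∈ t +ᵥ K} fun y => (‖h y.1.2‖₊ : ℝ≥0∞)).trans_le
      (hN (t, 0) _ _ (fun y => (indicator_le_self _ _ y).trans ?_) fun y hy => ?_)
    · exact (ofReal_norm _).symm.trans_le (ENNReal.ofReal_le_ofReal (hC _))
    · refine indicator_apply_eq_zero.mpr fun hyK => ?_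
      have hy0 : h y.1.2 = 0 := image_eq_zero_of_notMem_tsupport fun hyh =>
        hy ⟨by simpa [mem_vadd_set_iff_neg_vadd_mem, neg_add_eq_sub] using hyK, by simpa using hyh⟩
      simp [hy0]
  · set ι := ContinuousLinearMap.inl ℝ (EuclideanSpace ℝ (Fin d)) (EuclideanSpace ℝ (Fin m))
    set G : EuclideanSpace ℝ (Fin d) × EuclideanSpace ℝ (Fin m) → ℂ := fun w => f w.1 * h (-w.2)
    have hG : Continuous G := (hf.comp continuous_fst).mul (hh.comp continuous_snd.neg)
    have hGc : HasCompactSupport G :=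
      hfc.mul_prod (g := fun y => h (-y)) (hhc.comp_homeomorph (Homeomorph.neg _))
    have hterm : ∀ t (l : L), h l.1.2 * f (t - l.1.1) = G (ι t - l) := fun t l => by
      simp [G, ι, mul_comm]
    have hP := ZLattice.continuous_periodization (L := L) hG hGc
    have hper := ZLattice.periodization_periodic (L := L) G
    have hUC := (ZLattice.uniformContinuous_of_periodic hP hper).comp ι.uniformContinuous
    simp only [hterm]
    exact ⟨fun t => ZLattice.summable_norm_apply_sub hGc _, hUC,
      ZLattice.isBohrAlmostPeriodic_comp_of_periodic hP hper ι⟩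

/-- For a Euclidean cut-and-project scheme given by a full-rank lattice
`L ⊂ ℝ^d × ℝ^m` and `h : ℝ^m → ℂ` continuous with compact support, the weighted Dirac comb
`ω_h = ∑_{(x,x⋆) ∈ L} h(x⋆) δ_x` is translation bounded (a) and strongly almost periodic (b). -/
theorem fourierTransformable_sap_stmt13 {d m : ℕ}
    (L : Submodule ℤ (EuclideanSpace ℝ (Fin d) × EuclideanSpace ℝ (Fin m)))
    [DiscreteTopology L] [IsZLattice ℝ L]
    (hinj : ∀ p q : L, (p : EuclideanSpace ℝ (Fin d) × EuclideanSpace ℝ (Fin m)).1 =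
      (q : EuclideanSpace ℝ (Fin d) × EuclideanSpace ℝ (Fin m)).1 → p = q)
    (hdense : Dense (Prod.snd '' (L : Set (EuclideanSpace ℝ (Fin d) × EuclideanSpace ℝ (Fin m)))))
    (h : EuclideanSpace ℝ (Fin m) → ℂ) (hh : Continuous h) (hhc : HasCompactSupport h) :
    -- (a) translation boundedness of `ω_h`
    (∀ K : Set (EuclideanSpace ℝ (Fin d)), IsCompact K →
      (⨆ t : EuclideanSpace ℝ (Fin d),
        ∑' l : {y : L // (y : EuclideanSpace ℝ (Fin d) × EuclideanSpace ℝ (Fin m)).1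
            ∈ (t +ᵥ K : Set (EuclideanSpace ℝ (Fin d)))},
          (‖h (l.1 : EuclideanSpace ℝ (Fin d) × EuclideanSpace ℝ (Fin m)).2‖₊ : ℝ≥0∞)) < ⊤) ∧
    -- (b) strong almost periodicity of `ω_h`
    (∀ f : EuclideanSpace ℝ (Fin d) → ℂ, Continuous f → HasCompactSupport f →
      (∀ t : EuclideanSpace ℝ (Fin d),
        Summable fun l : L =>
          ‖h (l : EuclideanSpace ℝ (Fin d) × EuclideanSpace ℝ (Fin m)).2
            * f (t - (l : EuclideanSpace ℝ (Fin d) × EuclideanSpace ℝ (Fin m)).1)‖) ∧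
      UniformContinuous (fun t : EuclideanSpace ℝ (Fin d) =>
        ∑' l : L, h (l : EuclideanSpace ℝ (Fin d) × EuclideanSpace ℝ (Fin m)).2
          * f (t - (l : EuclideanSpace ℝ (Fin d) × EuclideanSpace ℝ (Fin m)).1)) ∧
      IsBohrAlmostPeriodic (fun t : EuclideanSpace ℝ (Fin d) =>
        ∑' l : L, h (l : EuclideanSpace ℝ (Fin d) × EuclideanSpace ℝ (Fin m)).2
          * f (t - (l : EuclideanSpace ℝ (Fin d) × EuclideanSpace ℝ (Fin m)).1))) :=
  fourierTransformable_sap_stmt13_general L h hh hhc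
end
end

section
/- Let ρ be a positive Radon measure on ℝ^d which is weakly admissible, i.e., for every continuous compactly supported f : ℝ^d → ℂ the Fourier transform 𝓕f lies in L²(ρ), and let g : ℝ^d → ℂ be a bounded measurable function. Then for every continuous compactly supported f : ℝ^d → ℂ, the function h : ℝ^d → ℂ defined by h(t) = ∫_{ℝ^d} ‖𝓕f(x+t)‖² g(x) dρ(x) is well defined, bounded, and uniformly continuous on ℝ^d. -/
/-!
The map `u ↦ 𝓕 (u • f)` from bounded continuous functions to `L²(ρ)` is linear, and its graph is
closed: uniform convergence of `u` gives pointwise convergence of `𝓕 (u • f)`, while convergence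
in `L²(ρ)` gives an a.e. convergent subsequence. By the closed graph theorem it is bounded.

Translating `𝓕 f` is modulating `f`: `𝓕 f (· + t) = 𝓕 (e_t • f)` with `e_t v = 𝐞 (-⟪v, t⟫)`. On the
support of `f` one may replace `e_t` by `e_t * χ` for a compactly supported cutoff `χ`, and these
depend Lipschitz-continuously on `t` in the sup norm. Hence `t ↦ 𝓕 f (· + t)` is a bounded Lipschitz
curve in `L²(ρ)`, and `h t = ⟪𝓕 f (· + t), g • 𝓕 f (· + t)⟫` is a bounded quadratic form evaluated
along it.
-/

open MeasureTheory Metric Filter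
open scoped Pointwise FourierTransform RealInnerProductSpace ENNReal Topology
open scoped BoundedContinuousFunction InnerProductSpace NNReal

noncomputable section

section ClosedGraph

variable {𝕜 E F α : Type*} [NontriviallyNormedField 𝕜]
  [NormedAddCommGroup E] [NormedSpace 𝕜 E] [CompleteSpace E]
  [NormedAddCommGroup F] [NormedSpace 𝕜 F] [CompleteSpace F]
  [TopologicalSpace α] [MeasurableSpace α] {μ : Measure α} {p : ℝ≥0∞} [Fact (1 ≤ p)]

theorem ContinuousLinearMap.exists_toLp_ae_eq (S : E →L[𝕜] α →ᵇ F) (hS : ∀ u, MemLp (S u) p μ) :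
    ∃ T : E →L[𝕜] Lp F p μ, ∀ u, T u =ᵐ[μ] S u := by
  let T₀ : E →ₗ[𝕜] Lp F p μ :=
    { toFun u := (hS u).toLp
      map_add' u v := by
        rw [← MemLp.toLp_add]
        exact MemLp.toLp_congr _ _ (ae_of_all _ fun _ => by simp)
      map_smul' c u := by
        rw [RingHom.id_apply, ← MemLp.toLp_const_smul]
        exact MemLp.toLp_congr _ _ (ae_of_all _ fun _ => by simp) }
  have hT₀ : ∀ u, T₀ u =ᵐ[μ] S u := fun u => (hS u).coeFn_toLp
  refine ⟨.ofSeqClosedGraph (g := T₀) fun u x y hux huy => ?_, hT₀⟩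
  obtain ⟨ns, hns, hae⟩ := (tendstoInMeasure_of_tendsto_Lp huy).exists_seq_tendsto_ae
  refine Lp.ext ?_
  filter_upwards [hae, ae_all_iff.mpr fun n => hT₀ (u n), hT₀ x] with z hyz hu hx
  rw [hx]
  refine tendsto_nhds_unique hyz ?_
  simp only [Function.comp_apply, hu]
  exact ((continuous_eval_const z).tendsto _).comp
    ((S.continuous.tendsto x).comp (hux.comp hns.tendsto_atTop))

end ClosedGraph

namespace BoundedContinuousFunction

variable {𝕜 E α : Type*} [RCLike 𝕜] [NormedAddCommGroup E] [NormedSpace 𝕜 E]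
  [TopologicalSpace α] [MeasurableSpace α] [OpensMeasurableSpace α] {μ : Measure α}
  {p : ℝ≥0∞}

theorem memLp_smul (u : α →ᵇ 𝕜) (f : Lp E p μ) : MemLp (fun x => u x • f x) p μ :=
  (Lp.memLp f).of_le_mul (u.continuous.aestronglyMeasurable.smul (Lp.aestronglyMeasurable f))
    (ae_of_all _ fun x => (norm_smul_le _ _).trans (by gcongr; exact u.norm_coe_le_norm x))

def smulLp [Fact (1 ≤ p)] (f : Lp E p μ) : (α →ᵇ 𝕜) →L[𝕜] Lp E p μ :=
  LinearMap.mkContinuous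
    { toFun u := (u.memLp_smul f).toLp
      map_add' u v := by
        rw [← MemLp.toLp_add]
        exact MemLp.toLp_congr _ _ (ae_of_all _ fun _ => by simp [add_smul])
      map_smul' c u := by
        rw [RingHom.id_apply, ← MemLp.toLp_const_smul]
        exact MemLp.toLp_congr _ _ (ae_of_all _ fun _ => by simp [smul_smul]) }
    ‖f‖ fun u => by
      rw [mul_comm]
      refine Lp.norm_le_mul_norm_of_ae_le_mul ?_
      filter_upwards [(u.memLp_smul f).coeFn_toLp] with x hx
      simp only [LinearMap.coe_mk, AddHom.coe_mk, hx]
      exact (norm_smul_le _ _).trans (by gcongr; exact u.norm_coe_le_norm x)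

theorem coeFn_smulLp [Fact (1 ≤ p)] (f : Lp E p μ) (u : α →ᵇ 𝕜) :
    smulLp f u =ᵐ[μ] fun x => u x • f x :=
  (u.memLp_smul f).coeFn_toLp

end BoundedContinuousFunction

theorem Real.norm_fourierChar_sub_le (a b : ℝ) :
    ‖(𝐞 a : ℂ) - 𝐞 b‖ ≤ 2 * Real.pi * |a - b| := by
  have h : (𝐞 a : ℂ) - 𝐞 b = 𝐞 b * (𝐞 (a - b) - 1) := by
    rw [mul_sub, ← Circle.coe_mul, ← AddChar.map_add_eq_mul, add_sub_cancel, mul_one]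
  rw [h, norm_mul, Circle.norm_coe, one_mul, Real.fourierChar_apply, mul_comm]
  refine Real.norm_exp_I_mul_ofReal_sub_one_le.trans_eq ?_
  rw [Real.norm_eq_abs, abs_mul, abs_of_pos Real.two_pi_pos]

section Modulation

variable {V : Type*} [NormedAddCommGroup V] [InnerProductSpace ℝ V] [FiniteDimensional ℝ V]

theorem exists_lipschitzWith_modulation {K : Set V} (hK : IsCompact K) :
    ∃ (b : V → V →ᵇ ℂ) (L : ℝ≥0), LipschitzWith L b ∧ (∀ t, ‖b t‖ ≤ 1) ∧
      ∀ t, ∀ x ∈ K, b t x = 𝐞 (-⟪x, t⟫) := by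
  obtain ⟨χ, hχK, -, hχs, hχ01⟩ :=
    exists_continuous_one_zero_of_isCompact hK isClosed_empty (Set.disjoint_empty _)
  have hχx : ∀ x, ‖(χ x : ℂ)‖ = χ x := fun x => by
    rw [Complex.norm_real, Real.norm_of_nonneg (hχ01 x).1]
  obtain ⟨C, hC⟩ := (continuous_norm.mul χ.continuous).bounded_above_of_compact_support
    hχs.mul_left
  have hbc : ∀ t, Continuous fun x : V => (𝐞 (-⟪x, t⟫) : ℂ) * χ x := fun t => by fun_prop
  let b t : V →ᵇ ℂ := .ofNormedAddCommGroup _ (hbc t) 1 fun x => by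
    simpa only [norm_mul, Circle.norm_coe, one_mul, hχx] using (hχ01 x).2
  refine ⟨b, _, .of_dist_le' (K := 2 * Real.pi * C) fun t s => ?_, fun t => ?_, fun t x hx => ?_⟩
  · have hC0 : 0 ≤ C := (norm_nonneg _).trans (hC 0)
    refine (BoundedContinuousFunction.dist_le (by positivity)).2 fun x => ?_
    have hphase : |-⟪x, t⟫ - -⟪x, s⟫| ≤ ‖x‖ * dist t s := by
      rw [neg_sub_neg, ← inner_sub_right, dist_comm, dist_eq_norm]
      exact abs_real_inner_le_norm x (s - t)
    have hxC : ‖x‖ * χ x ≤ C := (Real.le_norm_self _).trans (hC x)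
    calc dist (b t x) (b s x) = ‖(𝐞 (-⟪x, t⟫) : ℂ) - 𝐞 (-⟪x, s⟫)‖ * χ x := by
          rw [dist_eq_norm, ← hχx, ← norm_mul, sub_mul]; rfl
      _ ≤ 2 * Real.pi * (‖x‖ * dist t s) * χ x := by
          gcongr
          · exact (hχ01 x).1
          · exact (Real.norm_fourierChar_sub_le _ _).trans (by gcongr)
      _ = 2 * Real.pi * (‖x‖ * χ x) * dist t s := by ring
      _ ≤ 2 * Real.pi * C * dist t s := by gcongr
  · exact BoundedContinuousFunction.norm_ofNormedAddCommGroup_le _ zero_le_one _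
  · change (𝐞 (-⟪x, t⟫) : ℂ) * χ x = 𝐞 (-⟪x, t⟫)
    rw [hχK hx, Pi.one_apply, Complex.ofReal_one, mul_one]

end Modulation

section Fourier

variable {V E : Type*} [NormedAddCommGroup V] [InnerProductSpace ℝ V] [MeasurableSpace V]
  [BorelSpace V] [FiniteDimensional ℝ V] [NormedAddCommGroup E] [NormedSpace ℂ E]

theorem Real.fourier_fourierChar_smul (f : V → E) (t z : V) :
    𝓕 (fun v => 𝐞 (-⟪v, t⟫) • f v) z = 𝓕 f (z + t) := by
  simp only [Real.fourier_eq, smul_smul, ← AddChar.map_add_eq_mul, inner_add_right, neg_add]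

theorem Real.fourier_smul_eq_of_eqOn_tsupport {f : V → E} {u : V → ℂ} {t : V}
    (hu : ∀ v ∈ tsupport f, u v = 𝐞 (-⟪v, t⟫)) (z : V) :
    𝓕 (fun v => u v • f v) z = 𝓕 f (z + t) := by
  refine .trans (congrArg (fun φ : V → E => 𝓕 φ z) (funext fun v => ?_))
    (Real.fourier_fourierChar_smul f t z)
  by_cases hv : v ∈ tsupport f
  · rw [hu v hv, Circle.smul_def]
  · rw [image_eq_zero_of_notMem_tsupport hv, smul_zero, smul_zero]

theorem exists_continuousLinearMap_ae_eq_fourier_smul [CompleteSpace E] {f : V → E}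
    (hf : Integrable f) {p : ℝ≥0∞} [Fact (1 ≤ p)] (ρ : Measure V)
    (hρ : ∀ u : V →ᵇ ℂ, MemLp (𝓕 fun v => u v • f v) p ρ) :
    ∃ T : (V →ᵇ ℂ) →L[ℂ] Lp E p ρ, ∀ u, T u =ᵐ[ρ] 𝓕 fun v => u v • f v := by
  let S := Real.Lp.fourierTransformCLM V E ∘L BoundedContinuousFunction.smulLp (hf.toL1 f)
  have hS : ∀ u, ⇑(S u) = 𝓕 fun v => u v • f v := fun u => by
    ext z
    refine Real.fourier_congr_ae ?_ z
    filter_upwards [BoundedContinuousFunction.coeFn_smulLp (hf.toL1 f) u, hf.coeFn_toL1]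
      with v hv hfv
    exact hv.trans (congrArg _ hfv)
  obtain ⟨T, hT⟩ := S.exists_toLp_ae_eq fun u => hS u ▸ hρ u
  exact ⟨T, fun u => hS u ▸ hT u⟩

end Fourier

section InnerSelf

variable {𝕜 H : Type*} [RCLike 𝕜] [NormedAddCommGroup H] [InnerProductSpace 𝕜 H]

theorem ContinuousLinearMap.norm_inner_map_self_le (A : H →L[𝕜] H) (x : H) :
    ‖⟪x, A x⟫_𝕜‖ ≤ ‖A‖ * ‖x‖ ^ 2 :=
  calc ‖⟪x, A x⟫_𝕜‖ ≤ ‖x‖ * (‖A‖ * ‖x‖) :=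
        (norm_inner_le_norm _ _).trans (by gcongr; exact A.le_opNorm x)
    _ = ‖A‖ * ‖x‖ ^ 2 := by ring

theorem ContinuousLinearMap.norm_inner_map_self_sub_le (A : H →L[𝕜] H) (x y : H) :
    ‖⟪x, A x⟫_𝕜 - ⟪y, A y⟫_𝕜‖ ≤ ‖A‖ * (‖x‖ + ‖y‖) * ‖x - y‖ := by
  have h : ⟪x, A x⟫_𝕜 - ⟪y, A y⟫_𝕜 = ⟪x - y, A x⟫_𝕜 + ⟪y, A (x - y)⟫_𝕜 := by
    rw [inner_sub_left, map_sub, inner_sub_right]; ring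
  rw [h]
  calc _ ≤ ‖x - y‖ * (‖A‖ * ‖x‖) + ‖y‖ * (‖A‖ * ‖x - y‖) := by
        refine (norm_add_le _ _).trans (add_le_add ?_ ?_) <;>
          exact (norm_inner_le_norm _ _).trans (by gcongr; exact A.le_opNorm _)
    _ = ‖A‖ * (‖x‖ + ‖y‖) * ‖x - y‖ := by ring

theorem LipschitzWith.inner_map_self {X : Type*} [PseudoMetricSpace X] {K B : ℝ≥0}
    {Φ : X → H} (hΦ : LipschitzWith K Φ) (hB : ∀ t, ‖Φ t‖ ≤ B) (A : H →L[𝕜] H) :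
    LipschitzWith (‖A‖₊ * (2 * B) * K) fun t => ⟪Φ t, A (Φ t)⟫_𝕜 := by
  refine .of_dist_le_mul fun t s => ?_
  rw [dist_eq_norm]
  refine (A.norm_inner_map_self_sub_le _ _).trans ?_
  push_cast
  rw [mul_assoc _ (K : ℝ), two_mul]
  gcongr
  · exact hB t
  · exact hB s
  · rw [← dist_eq_norm]; exact hΦ.dist_le_mul t s

end InnerSelf

theorem normSq_mul_ae_eq_inner_holderL {α : Type*} [MeasurableSpace α] {μ : Measure α}
    {F g : α → ℂ} {φ : Lp ℂ 2 μ} (hφ : φ =ᵐ[μ] F) {G : Lp ℂ ∞ μ} (hG : G =ᵐ[μ] g) :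
    (fun x => (‖F x‖ ^ 2 : ℂ) * g x) =ᵐ[μ]
      fun x => ⟪φ x, (ContinuousLinearMap.mul ℂ ℂ).holderL μ ∞ 2 2 G φ x⟫_ℂ := by
  filter_upwards [hφ, hG, (ContinuousLinearMap.mul ℂ ℂ).coeFn_holder (r := 2) G φ]
    with x hφx hGx hx
  simp only [ContinuousLinearMap.holderL_apply_apply, hx, hφx, hGx, RCLike.inner_apply,
    ContinuousLinearMap.mul_apply']
  rw [mul_assoc, Complex.mul_conj', mul_comm]

theorem fourierTransformable_sap_stmt16_general {d : ℕ}
    (ρ : Measure (EuclideanSpace ℝ (Fin d)))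
    (hadm : ∀ f : EuclideanSpace ℝ (Fin d) → ℂ, Continuous f → HasCompactSupport f →
      MemLp (𝓕 f) 2 ρ)
    (g : EuclideanSpace ℝ (Fin d) → ℂ) (hgm : Measurable g)
    (hgb : ∃ C : ℝ, ∀ x, ‖g x‖ ≤ C) :
    ∀ f : EuclideanSpace ℝ (Fin d) → ℂ, Continuous f → HasCompactSupport f →
      (∀ t : EuclideanSpace ℝ (Fin d),
        Integrable (fun x => (‖𝓕 f (x + t)‖ ^ 2 : ℂ) * g x) ρ) ∧
      (∃ C : ℝ, ∀ t : EuclideanSpace ℝ (Fin d),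
        ‖∫ x, (‖𝓕 f (x + t)‖ ^ 2 : ℂ) * g x ∂ρ‖ ≤ C) ∧
      UniformContinuous (fun t : EuclideanSpace ℝ (Fin d) =>
        ∫ x, (‖𝓕 f (x + t)‖ ^ 2 : ℂ) * g x ∂ρ) := by
  intro f hfc hfs
  obtain ⟨T, hT⟩ := exists_continuousLinearMap_ae_eq_fourier_smul (p := 2)
    (hfc.integrable_of_hasCompactSupport hfs) ρ
    fun u => hadm _ (u.continuous.smul hfc) (hfs.smul_left (f := ⇑u))
  obtain ⟨b, K, hb_lip, hb_norm, hb_char⟩ := exists_lipschitzWith_modulation hfs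
  have hTb : ∀ t, T (b t) =ᵐ[ρ] fun x => 𝓕 f (x + t) := fun t =>
    (hT (b t)).trans (ae_of_all _ (Real.fourier_smul_eq_of_eqOn_tsupport (hb_char t)))
  have hTb_norm : ∀ t, ‖T (b t)‖ ≤ ‖T‖ := fun t =>
    (T.le_opNorm _).trans (mul_le_of_le_one_right (norm_nonneg _) (hb_norm t))
  obtain ⟨C, hC⟩ := hgb
  have hg : MemLp g ∞ ρ := memLp_top_of_bound hgm.aestronglyMeasurable C (ae_of_all _ hC)
  let M := (ContinuousLinearMap.mul ℂ ℂ).holderL ρ ∞ 2 2 (hg.toLp g)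
  have hae t := normSq_mul_ae_eq_inner_holderL (hTb t) hg.coeFn_toLp
  have h_eq_inner : (fun t => ∫ x, (‖𝓕 f (x + t)‖ ^ 2 : ℂ) * g x ∂ρ) =
      fun t => ⟪T (b t), M (T (b t))⟫_ℂ :=
    funext fun t => (integral_congr_ae (hae t)).trans (L2.inner_def _ _).symm
  refine ⟨fun t => (L2.integrable_inner _ _).congr (hae t).symm,
    ⟨‖M‖ * ‖T‖ ^ 2, fun t => ?_⟩, ?_⟩
  · rw [congrFun h_eq_inner t]
    exact (M.norm_inner_map_self_le _).trans (by gcongr; exact hTb_norm t)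
  · rw [h_eq_inner]
    exact ((T.lipschitz.comp hb_lip).inner_map_self (B := ‖T‖₊) hTb_norm M).uniformContinuous

/-- Let `ρ` be a weakly admissible positive Radon measure on `ℝ^d` and
`g : ℝ^d → ℂ` a bounded measurable function. Then for every continuous compactly supported
`f : ℝ^d → ℂ`, the function `h(t) = ∫ ‖𝓕f(x+t)‖² g(x) dρ(x)` is well defined (the integrand is
`ρ`-integrable for every `t`), bounded, and uniformly continuous. -/
theorem fourierTransformable_sap_stmt16 {d : ℕ}
    (ρ : Measure (EuclideanSpace ℝ (Fin d))) [ρ.Regular]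
    (hadm : ∀ f : EuclideanSpace ℝ (Fin d) → ℂ, Continuous f → HasCompactSupport f →
      MemLp (𝓕 f) 2 ρ)
    (g : EuclideanSpace ℝ (Fin d) → ℂ) (hgm : Measurable g)
    (hgb : ∃ C : ℝ, ∀ x, ‖g x‖ ≤ C) :
    ∀ f : EuclideanSpace ℝ (Fin d) → ℂ, Continuous f → HasCompactSupport f →
      (∀ t : EuclideanSpace ℝ (Fin d),
        Integrable (fun x => (‖𝓕 f (x + t)‖ ^ 2 : ℂ) * g x) ρ) ∧
      (∃ C : ℝ, ∀ t : EuclideanSpace ℝ (Fin d),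
        ‖∫ x, (‖𝓕 f (x + t)‖ ^ 2 : ℂ) * g x ∂ρ‖ ≤ C) ∧
      UniformContinuous (fun t : EuclideanSpace ℝ (Fin d) =>
        ∫ x, (‖𝓕 f (x + t)‖ ^ 2 : ℂ) * g x ∂ρ) :=
  fourierTransformable_sap_stmt16_general ρ hadm g hgm hgb
end
end
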